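/- arXiv:2012.04723 — 4 statements merged into one kernel-verified Lean document; each statement's English description precedes it below -/
import Mathlib

section
/- Let B_ext = ⟨V ∪ V_+, F ∪ F_+, E_ext⟩ be a bipartite graph, B its induced bipartite subgraph on (V, F), and B_+ its induced bipartite subgraph on (V_+, F_+). Let M be a perfect matching of B, M_+ a perfect matching of B_+, and M_ext = M ∪ M_+. Then for all vertices x, y ∈ V ∪ F: if y is reachable from x in the oriented graph G(B, M), then y is reachable from x in the oriented graph G(B_ext, M_ext). (Ancestral relations present in the causal ordering graph of B are also present in the causal ordering graph of B_ext.) -/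
/-- `M` is a perfect matching of the bipartite graph with variable vertices `V`,
equation vertices `F`, and edge set `E` (an edge is a pair `(v, f)` with `v` a
variable vertex and `f` an equation vertex): `M` is a set of edges such that
every vertex of `V ∪ F` is incident to exactly one edge of `M`. -/
def IsPerfectMatching {α : Type*} (V F : Set α) (E M : Set (α × α)) : Prop :=
  M ⊆ E ∧ ∀ x ∈ V ∪ F, ∃! e : α × α, e ∈ M ∧ (e.1 = x ∨ e.2 = x)

/-- The directed edge relation of the oriented graph `G(B, M)`: an edge
`(v − f) ∈ E` is oriented as `f → v` if `(v − f) ∈ M`, and as `v → f` otherwise. -/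
def OStep {α : Type*} (E M : Set (α × α)) (x y : α) : Prop :=
  ((x, y) ∈ E ∧ (x, y) ∉ M) ∨ ((y, x) ∈ E ∧ (y, x) ∈ M)

/-- `y` is reachable from `x` in `G(B, M)`: there is a directed path
(possibly of length zero) from `x` to `y`. -/
def Reach {α : Type*} (E M : Set (α × α)) (x y : α) : Prop :=
  Relation.ReflTransGen (OStep E M) x y

/-! Every edge of `B` keeps its orientation in `G(B_ext, M ∪ M₊)`: matched edges stay matched,
and an unmatched edge of `B` cannot lie in `M₊`, whose edges start in `V₊`, disjoint from `V`.
So every directed path of `G(B, M)` is one of `G(B_ext, M ∪ M₊)`. -/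

section Monotonicity

variable {α : Type*} {E E' M M' : Set (α × α)}

theorem OStep.mono (hE : E ⊆ E') (hM : M ⊆ M') (hME : M' ∩ E ⊆ M) {x y : α} :
    OStep E M x y → OStep E' M' x y := by
  rintro (⟨he, hnm⟩ | ⟨he, hm⟩)
  · exact Or.inl ⟨hE he, fun hm' => hnm (hME ⟨hm', he⟩)⟩
  · exact Or.inr ⟨hE he, hM hm⟩

theorem Reach.mono (hE : E ⊆ E') (hM : M ⊆ M') (hME : M' ∩ E ⊆ M) {x y : α}
    (h : Reach E M x y) : Reach E' M' x y :=
  Relation.ReflTransGen.mono (fun _ _ => OStep.mono hE hM hME) x y h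

end Monotonicity

theorem reach_preserved_under_extension_general {α : Type*}
    (V Vp F Fp : Set α)
    (hVVp : Disjoint V Vp)
    (Eext : Set (α × α))
    (M Mp : Set (α × α))
    (hMp : IsPerfectMatching Vp Fp {e ∈ Eext | e.1 ∈ Vp ∧ e.2 ∈ Fp} Mp) :
    ∀ x ∈ V ∪ F, ∀ y ∈ V ∪ F,
      Reach {e ∈ Eext | e.1 ∈ V ∧ e.2 ∈ F} M x y → Reach Eext (M ∪ Mp) x y := by
  intro x _ y _
  refine Reach.mono (Set.sep_subset _ _) Set.subset_union_left ?_
  rintro e ⟨he | he, -, heV, -⟩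
  · exact he
  · exact absurd (hMp.1 he).2.1 (Set.disjoint_left.mp hVVp heV)

/-- Reachability (ancestral relations) in `G(B, M)` between vertices of
`V ∪ F` is preserved in `G(B_ext, M ∪ M₊)`. -/
theorem reach_preserved_under_extension {α : Type*}
    (V Vp F Fp : Set α)
    (hVfin : V.Finite) (hVpfin : Vp.Finite) (hFfin : F.Finite) (hFpfin : Fp.Finite)
    (hVVp : Disjoint V Vp) (hFFp : Disjoint F Fp)
    (hVF : Disjoint (V ∪ Vp) (F ∪ Fp))
    (Eext : Set (α × α))
    (hE : ∀ e ∈ Eext, e.1 ∈ V ∪ Vp ∧ e.2 ∈ F ∪ Fp)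
    (M Mp : Set (α × α))
    (hM : IsPerfectMatching V F {e ∈ Eext | e.1 ∈ V ∧ e.2 ∈ F} M)
    (hMp : IsPerfectMatching Vp Fp {e ∈ Eext | e.1 ∈ Vp ∧ e.2 ∈ Fp} Mp) :
    ∀ x ∈ V ∪ F, ∀ y ∈ V ∪ F,
      Reach {e ∈ Eext | e.1 ∈ V ∧ e.2 ∈ F} M x y → Reach Eext (M ∪ Mp) x y :=
  reach_preserved_under_extension_general V Vp F Fp hVVp Eext M Mp hMp
end

section
/- Let B_ext = ⟨V ∪ V_+, F ∪ F_+, E_ext⟩ be a bipartite graph, B its induced bipartite subgraph on (V, F), and B_+ its induced bipartite subgraph on (V_+, F_+). Let M be a perfect matching of B, M_+ a perfect matching of B_+, and M_ext = M ∪ M_+. If no vertex of V_+ is adjacent in B_ext to a vertex of F, then for all vertices x, y ∈ V ∪ F: y is reachable from x in the oriented graph G(B_ext, M_ext) if and only if y is reachable from x in the oriented graph G(B, M). (Ancestral relations among V ∪ F that are absent in the causal ordering graph of B are also absent in the causal ordering graph of B_ext.) -/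
/-!
A vertex outside `B` steps in `G(B_ext, M ∪ M₊)` only to `V₊` (along an edge of `M₊`) or to `F₊`
(along an edge leaving `V₊`, which cannot end in `F`), so a path that leaves `B` never returns.
Hence a path between two vertices of `B` stays in `B`, where the orientations of the two graphs
agree; conversely `M₊` contains no edge of `B`, so `G(B, M)` is a subgraph of `G(B_ext, M ∪ M₊)`.
-/

theorem Relation.ReflTransGen.of_no_reentry {α : Type*} {r s : α → α → Prop} {U : Set α}
    (hout : ∀ a b, r a b → a ∉ U → b ∉ U) (hin : ∀ a b, r a b → a ∈ U → b ∈ U → s a b)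
    {x y : α} (h : Relation.ReflTransGen r x y) (hy : y ∈ U) :
    Relation.ReflTransGen s x y := by
  induction h with
  | refl => exact .refl
  | @tail b c _ hbc ih =>
    have hb : b ∈ U := by_contra fun hb => hout b c hbc hb hy
    exact (ih hb).tail (hin b c hbc hb hy)

theorem oStep_mono {α : Type*} {E E₂ M M₂ : Set (α × α)} (hE : E ⊆ E₂) (hM : M ⊆ M₂)
    (hM₂ : ∀ e ∈ E, e ∈ M₂ → e ∈ M) {a b : α} : OStep E M a b → OStep E₂ M₂ a b
  | .inl ⟨he, hnm⟩ => .inl ⟨hE he, fun hm => hnm (hM₂ _ he hm)⟩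
  | .inr ⟨he, hm⟩ => .inr ⟨hE he, hM hm⟩

theorem reach_mono {α : Type*} {E E₂ M M₂ : Set (α × α)} (hE : E ⊆ E₂) (hM : M ⊆ M₂)
    (hM₂ : ∀ e ∈ E, e ∈ M₂ → e ∈ M) {a b : α} : Reach E M a b → Reach E₂ M₂ a b :=
  Relation.ReflTransGen.mono (fun _ _ => oStep_mono hE hM hM₂) a b

section Extension

variable {α : Type*} {V Vp F Fp : Set α} {Eext M Mp : Set (α × α)}

theorem oStep_restrict (hVVp : Disjoint V Vp) (hVF : Disjoint (V ∪ Vp) (F ∪ Fp))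
    (hE : ∀ e ∈ Eext, e.1 ∈ V ∪ Vp ∧ e.2 ∈ F ∪ Fp)
    (hM : M ⊆ {e ∈ Eext | e.1 ∈ V ∧ e.2 ∈ F}) (hMp : Mp ⊆ {e ∈ Eext | e.1 ∈ Vp ∧ e.2 ∈ Fp})
    {a b : α} (hstep : OStep Eext (M ∪ Mp) a b) (ha : a ∈ V ∪ F) (hb : b ∈ V ∪ F) :
    OStep {e ∈ Eext | e.1 ∈ V ∧ e.2 ∈ F} M a b := by
  rcases hstep with ⟨he, hnm⟩ | ⟨he, hm | hm⟩
  · obtain ⟨haV, hbF⟩ := hE _ he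
    exact .inl ⟨⟨he, by grind, by grind⟩, fun h => hnm (.inl h)⟩
  · exact .inr ⟨hM hm, hm⟩
  · have hbVp := (hMp hm).2.1
    grind

theorem notMem_of_oStep_of_notMem (hVVp : Disjoint V Vp) (hVF : Disjoint (V ∪ Vp) (F ∪ Fp))
    (hE : ∀ e ∈ Eext, e.1 ∈ V ∪ Vp ∧ e.2 ∈ F ∪ Fp)
    (hM : M ⊆ {e ∈ Eext | e.1 ∈ V ∧ e.2 ∈ F}) (hMp : Mp ⊆ {e ∈ Eext | e.1 ∈ Vp ∧ e.2 ∈ Fp})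
    (hadj : ∀ v ∈ Vp, ∀ f ∈ F, (v, f) ∉ Eext)
    {a b : α} (hstep : OStep Eext (M ∪ Mp) a b) (ha : a ∉ V ∪ F) : b ∉ V ∪ F := by
  rcases hstep with ⟨he, -⟩ | ⟨-, hm | hm⟩
  · obtain ⟨haV, hbF⟩ := hE _ he
    have := hadj a
    grind
  · exact (ha (.inr (hM hm).2.2)).elim
  · have hbVp := (hMp hm).2.1
    grind

end Extension

theorem reach_iff_of_no_adjacency_general {α : Type*}
    (V Vp F Fp : Set α)
    (hVVp : Disjoint V Vp)
    (hVF : Disjoint (V ∪ Vp) (F ∪ Fp))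
    (Eext : Set (α × α))
    (hE : ∀ e ∈ Eext, e.1 ∈ V ∪ Vp ∧ e.2 ∈ F ∪ Fp)
    (M Mp : Set (α × α))
    (hM : IsPerfectMatching V F {e ∈ Eext | e.1 ∈ V ∧ e.2 ∈ F} M)
    (hMp : IsPerfectMatching Vp Fp {e ∈ Eext | e.1 ∈ Vp ∧ e.2 ∈ Fp} Mp)
    (hadj : ∀ v ∈ Vp, ∀ f ∈ F, (v, f) ∉ Eext) :
    ∀ x ∈ V ∪ F, ∀ y ∈ V ∪ F,
      (Reach Eext (M ∪ Mp) x y ↔ Reach {e ∈ Eext | e.1 ∈ V ∧ e.2 ∈ F} M x y) := by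
  intro x _ y hy
  refine ⟨fun h => h.of_no_reentry ?_ ?_ hy,
    reach_mono (Set.sep_subset _ _) Set.subset_union_left ?_⟩
  · exact fun _ _ => notMem_of_oStep_of_notMem hVVp hVF hE hM.1 hMp.1 hadj
  · exact fun _ _ => oStep_restrict hVVp hVF hE hM.1 hMp.1
  · exact fun e he hm => hm.resolve_right fun hmp =>
      hVVp.notMem_of_mem_left he.2.1 (hMp.1 hmp).2.1

/-- If no vertex of `V₊` is adjacent in `B_ext` to a vertex of `F`, then
for all `x, y ∈ V ∪ F`, `y` is reachable from `x` in `G(B_ext, M ∪ M₊)` if and only if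
`y` is reachable from `x` in `G(B, M)`: ancestral relations among `V ∪ F` that are
absent in the causal ordering graph of `B` are also absent for `B_ext`. -/
theorem reach_iff_of_no_adjacency {α : Type*}
    (V Vp F Fp : Set α)
    (hVfin : V.Finite) (hVpfin : Vp.Finite) (hFfin : F.Finite) (hFpfin : Fp.Finite)
    (hVVp : Disjoint V Vp) (hFFp : Disjoint F Fp)
    (hVF : Disjoint (V ∪ Vp) (F ∪ Fp))
    (Eext : Set (α × α))
    (hE : ∀ e ∈ Eext, e.1 ∈ V ∪ Vp ∧ e.2 ∈ F ∪ Fp)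
    (M Mp : Set (α × α))
    (hM : IsPerfectMatching V F {e ∈ Eext | e.1 ∈ V ∧ e.2 ∈ F} M)
    (hMp : IsPerfectMatching Vp Fp {e ∈ Eext | e.1 ∈ Vp ∧ e.2 ∈ Fp} Mp)
    (hadj : ∀ v ∈ Vp, ∀ f ∈ F, (v, f) ∉ Eext) :
    ∀ x ∈ V ∪ F, ∀ y ∈ V ∪ F,
      (Reach Eext (M ∪ Mp) x y ↔ Reach {e ∈ Eext | e.1 ∈ V ∧ e.2 ∈ F} M x y) :=
  reach_iff_of_no_adjacency_general V Vp F Fp hVVp hVF Eext hE M Mp hM hMp hadj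
end

section
/- Let M and M' be two perfect matchings of a bipartite graph B = ⟨V, F, E⟩. If an edge (v−f) ∈ E belongs to the symmetric difference of M and M' (equivalently, the edge is oriented differently in the oriented graphs G(B, M) and G(B, M')), then v and f lie on a common directed cycle in G(B, M), and likewise v and f lie on a common directed cycle in G(B, M'). Consequently, G(B, M) and G(B, M') differ only in the direction of directed cycles. -/
/-!
Following the `M'`-edge and then the `M`-edge at each variable vertex is a permutation `σ` of
the finite set `V`, and in `G(B, M)` every `w` reaches `σ w`. Since `σ` is a permutation of a
finite set, `σ w` also reaches `w`. For `(v, f) ∈ M \ M'` and `u` the `M'`-mate of `f` we have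
`σ u = v`, so `v` reaches `u`, and the edge `u → f` closes the path from `v` to `f`. For the
map `σ'` obtained by exchanging `M` and `M'` we have `σ' v = u`, hence the path `f → u ⇝ v`
in `G(B, M')`.
-/

open Function Set Relation

theorem Set.Finite.exists_pos_iterate_eq_self {α : Type*} {σ : α → α} {s : Set α}
    (hs : s.Finite) (hmaps : MapsTo σ s s) (hinj : InjOn σ s) {x : α} (hx : x ∈ s) :
    ∃ n, 0 < n ∧ σ^[n] x = x := by
  have : Finite s := hs.to_subtype
  obtain ⟨n, hn, hper⟩ := mem_periodicPts.mp
    (((hmaps.restrict_inj).mpr hinj).mem_periodicPts ⟨x, hx⟩)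
  refine ⟨n, hn, ?_⟩
  simpa [hmaps.iterate_restrict] using congrArg Subtype.val hper.eq

theorem Set.MapsTo.reflTransGen_iterate {α : Type*} {r : α → α → Prop} {σ : α → α}
    {s : Set α} (hmaps : MapsTo σ s s) (hstep : ∀ x ∈ s, ReflTransGen r x (σ x))
    {x : α} (hx : x ∈ s) : ∀ n, ReflTransGen r x (σ^[n] x)
  | 0 => .refl
  | n + 1 => by
    rw [iterate_succ_apply']
    exact (hmaps.reflTransGen_iterate hstep hx n).trans (hstep _ (hmaps.iterate n hx))

theorem Set.Finite.reflTransGen_apply_self {α : Type*} {r : α → α → Prop} {σ : α → α}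
    {s : Set α} (hs : s.Finite) (hmaps : MapsTo σ s s) (hinj : InjOn σ s)
    (hstep : ∀ x ∈ s, ReflTransGen r x (σ x)) {x : α} (hx : x ∈ s) :
    ReflTransGen r (σ x) x := by
  obtain ⟨n, hn, hper⟩ := hs.exists_pos_iterate_eq_self hmaps hinj hx
  have hshift : σ^[n - 1] (σ x) = x := by
    rw [← iterate_succ_apply, Nat.succ_eq_add_one, Nat.sub_add_cancel hn, hper]
  simpa only [hshift] using hmaps.reflTransGen_iterate hstep (hmaps hx) (n - 1)

section Mates

variable {α : Type*}

open Classical in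
noncomputable def rightMate (M : Set (α × α)) (x : α) : α :=
  if h : ∃ y, (x, y) ∈ M then h.choose else x

open Classical in
noncomputable def leftMate (M : Set (α × α)) (y : α) : α :=
  if h : ∃ x, (x, y) ∈ M then h.choose else y

noncomputable def alternatingNext (M N : Set (α × α)) : α → α :=
  leftMate M ∘ rightMate N

theorem mem_iff_eq_rightMate {M : Set (α × α)} {x : α} (h : ∃! y, (x, y) ∈ M) (y : α) :
    (x, y) ∈ M ↔ y = rightMate M x := by
  have hex := h.exists
  have hmate : (x, rightMate M x) ∈ M := by
    rw [rightMate, dif_pos hex]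
    exact hex.choose_spec
  exact ⟨fun hy => h.unique hy hmate, fun hy => hy ▸ hmate⟩

theorem mem_iff_eq_leftMate {M : Set (α × α)} {y : α} (h : ∃! x, (x, y) ∈ M) (x : α) :
    (x, y) ∈ M ↔ x = leftMate M y := by
  have hex := h.exists
  have hmate : (leftMate M y, y) ∈ M := by
    rw [leftMate, dif_pos hex]
    exact hex.choose_spec
  exact ⟨fun hx => h.unique hx hmate, fun hx => hx ▸ hmate⟩

end Mates

namespace IsPerfectMatching

variable {α : Type*} {V F : Set α} {E M N : Set (α × α)}
  (hVF : Disjoint V F) (hE : ∀ e ∈ E, e.1 ∈ V ∧ e.2 ∈ F)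
include hVF hE

theorem existsUnique_snd (hM : IsPerfectMatching V F E M) {x : α} (hx : x ∈ V) :
    ∃! y, (x, y) ∈ M := by
  obtain ⟨e, ⟨heM, hex⟩, huniq⟩ := hM.2 x (Or.inl hx)
  have hfst : e.1 = x :=
    hex.resolve_right fun h => disjoint_left.mp hVF hx (h ▸ (hE e (hM.1 heM)).2)
  exact ⟨e.2, hfst ▸ heM, fun y hy => congrArg Prod.snd (huniq (x, y) ⟨hy, Or.inl rfl⟩)⟩

theorem existsUnique_fst (hM : IsPerfectMatching V F E M) {y : α} (hy : y ∈ F) :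
    ∃! x, (x, y) ∈ M := by
  obtain ⟨e, ⟨heM, hey⟩, huniq⟩ := hM.2 y (Or.inr hy)
  have hsnd : e.2 = y :=
    hey.resolve_left fun h => disjoint_right.mp hVF hy (h ▸ (hE e (hM.1 heM)).1)
  exact ⟨e.1, hsnd ▸ heM, fun x hx => congrArg Prod.fst (huniq (x, y) ⟨hx, Or.inr rfl⟩)⟩

theorem mk_rightMate_mem (hM : IsPerfectMatching V F E M) {x : α} (hx : x ∈ V) :
    (x, rightMate M x) ∈ M :=
  (mem_iff_eq_rightMate (hM.existsUnique_snd hVF hE hx) _).mpr rfl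

theorem mk_leftMate_mem (hM : IsPerfectMatching V F E M) {y : α} (hy : y ∈ F) :
    (leftMate M y, y) ∈ M :=
  (mem_iff_eq_leftMate (hM.existsUnique_fst hVF hE hy) _).mpr rfl

theorem mapsTo_rightMate (hM : IsPerfectMatching V F E M) : MapsTo (rightMate M) V F :=
  fun _ hx => (hE _ (hM.1 (hM.mk_rightMate_mem hVF hE hx))).2

theorem mapsTo_leftMate (hM : IsPerfectMatching V F E M) : MapsTo (leftMate M) F V :=
  fun _ hy => (hE _ (hM.1 (hM.mk_leftMate_mem hVF hE hy))).1

theorem injOn_rightMate (hM : IsPerfectMatching V F E M) : InjOn (rightMate M) V :=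
  fun _ hx₁ _ hx₂ heq =>
    (hM.existsUnique_fst hVF hE (hM.mapsTo_rightMate hVF hE hx₁)).unique
      (hM.mk_rightMate_mem hVF hE hx₁) (heq ▸ hM.mk_rightMate_mem hVF hE hx₂)

theorem injOn_leftMate (hM : IsPerfectMatching V F E M) : InjOn (leftMate M) F :=
  fun _ hy₁ _ hy₂ heq =>
    (hM.existsUnique_snd hVF hE (hM.mapsTo_leftMate hVF hE hy₁)).unique
      (hM.mk_leftMate_mem hVF hE hy₁) (heq ▸ hM.mk_leftMate_mem hVF hE hy₂)

theorem reflTransGen_alternatingNext (hM : IsPerfectMatching V F E M)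
    (hN : IsPerfectMatching V F E N) {x : α} (hx : x ∈ V) :
    ReflTransGen (OStep E M) x (alternatingNext M N x) := by
  set y := rightMate N x
  have hxy : (x, y) ∈ N := hN.mk_rightMate_mem hVF hE hx
  have hy : y ∈ F := hN.mapsTo_rightMate hVF hE hx
  have hmate := mem_iff_eq_leftMate (hM.existsUnique_fst hVF hE hy)
  by_cases hxyM : (x, y) ∈ M
  · rw [alternatingNext, comp_apply, ← (hmate x).mp hxyM]
  · have hback : (leftMate M y, y) ∈ M := (hmate _).mpr rfl
    exact (ReflTransGen.single (show OStep E M x y from Or.inl ⟨hN.1 hxy, hxyM⟩)).tail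
      (Or.inr ⟨hM.1 hback, hback⟩)

theorem reflTransGen_alternatingNext_back (hVfin : V.Finite) (hM : IsPerfectMatching V F E M)
    (hN : IsPerfectMatching V F E N) {x : α} (hx : x ∈ V) :
    ReflTransGen (OStep E M) (alternatingNext M N x) x :=
  hVfin.reflTransGen_apply_self ((hM.mapsTo_leftMate hVF hE).comp (hN.mapsTo_rightMate hVF hE))
    ((hM.injOn_leftMate hVF hE).comp (hN.injOn_rightMate hVF hE) (hN.mapsTo_rightMate hVF hE))
    (fun _ => hM.reflTransGen_alternatingNext hVF hE hN) hx

theorem transGen_of_mem_of_notMem (hVfin : V.Finite) (hM : IsPerfectMatching V F E M)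
    (hN : IsPerfectMatching V F E N) {v f : α} (hvfM : (v, f) ∈ M) (hvfN : (v, f) ∉ N) :
    TransGen (OStep E M) v f ∧ TransGen (OStep E N) f v := by
  obtain ⟨hv, hf⟩ := hE _ (hM.1 hvfM)
  set u := leftMate N f
  have huf : (u, f) ∈ N := hN.mk_leftMate_mem hVF hE hf
  have hu : u ∈ V := hN.mapsTo_leftMate hVF hE hf
  have hfM := mem_iff_eq_leftMate (hM.existsUnique_fst hVF hE hf)
  have hufM : (u, f) ∉ M := fun h => hvfN (by rwa [(hfM v).mp hvfM, ← (hfM u).mp h])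
  have hnext_u : alternatingNext M N u = v := by
    have hmate_u := (mem_iff_eq_rightMate (hN.existsUnique_snd hVF hE hu) f).mp huf
    rw [alternatingNext, comp_apply, ← hmate_u, ← (hfM v).mp hvfM]
  have hnext_v : alternatingNext N M v = u := by
    have hmate_v := (mem_iff_eq_rightMate (hM.existsUnique_snd hVF hE hv) f).mp hvfM
    rw [alternatingNext, comp_apply, ← hmate_v]
  have hvu : ReflTransGen (OStep E M) v u :=
    hnext_u ▸ hM.reflTransGen_alternatingNext_back hVF hE hVfin hN hu
  have huv : ReflTransGen (OStep E N) u v :=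
    hnext_v ▸ hN.reflTransGen_alternatingNext_back hVF hE hVfin hM hv
  exact ⟨.tail' hvu (Or.inl ⟨hN.1 huf, hufM⟩), .head' (Or.inr ⟨hN.1 huf, huf⟩) huv⟩

end IsPerfectMatching

theorem symmDiff_edge_lies_on_cycle_general {α : Type*}
    (V F : Set α) (hVfin : V.Finite)
    (hVF : Disjoint V F)
    (E : Set (α × α))
    (hE : ∀ e ∈ E, e.1 ∈ V ∧ e.2 ∈ F)
    (M M' : Set (α × α))
    (hM : IsPerfectMatching V F E M) (hM' : IsPerfectMatching V F E M')
    (v f : α) (hvf : (v, f) ∈ E)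
    (hdiff : ((v, f) ∈ M ∧ (v, f) ∉ M') ∨ ((v, f) ∈ M' ∧ (v, f) ∉ M)) :
    (Relation.TransGen (OStep E M) v f ∧ Relation.TransGen (OStep E M) f v) ∧
    (Relation.TransGen (OStep E M') v f ∧ Relation.TransGen (OStep E M') f v) := by
  rcases hdiff with ⟨hvfM, hvfM'⟩ | ⟨hvfM', hvfM⟩
  · obtain ⟨hpathM, hpathM'⟩ := hM.transGen_of_mem_of_notMem hVF hE hVfin hM' hvfM hvfM'
    exact ⟨⟨hpathM, .single (Or.inr ⟨hvf, hvfM⟩)⟩,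
      ⟨.single (Or.inl ⟨hvf, hvfM'⟩), hpathM'⟩⟩
  · obtain ⟨hpathM', hpathM⟩ := hM'.transGen_of_mem_of_notMem hVF hE hVfin hM hvfM' hvfM
    exact ⟨⟨.single (Or.inl ⟨hvf, hvfM⟩), hpathM⟩,
      ⟨hpathM', .single (Or.inr ⟨hvf, hvfM'⟩)⟩⟩

/-- If an edge `(v − f) ∈ E` belongs to the symmetric difference of two
perfect matchings `M` and `M'` of `B` (i.e., it is oriented differently in `G(B, M)`
and `G(B, M')`), then `v` and `f` lie on a common directed cycle in `G(B, M)`, and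
likewise in `G(B, M')`: the two oriented graphs differ only in the direction of
directed cycles. -/
theorem symmDiff_edge_lies_on_cycle {α : Type*}
    (V F : Set α) (hVfin : V.Finite) (hFfin : F.Finite)
    (hVF : Disjoint V F)
    (E : Set (α × α))
    (hE : ∀ e ∈ E, e.1 ∈ V ∧ e.2 ∈ F)
    (M M' : Set (α × α))
    (hM : IsPerfectMatching V F E M) (hM' : IsPerfectMatching V F E M')
    (v f : α) (hvf : (v, f) ∈ E)
    (hdiff : ((v, f) ∈ M ∧ (v, f) ∉ M') ∨ ((v, f) ∈ M' ∧ (v, f) ∉ M)) :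
    (Relation.TransGen (OStep E M) v f ∧ Relation.TransGen (OStep E M) f v) ∧
    (Relation.TransGen (OStep E M') v f ∧ Relation.TransGen (OStep E M') f v) :=
  symmDiff_edge_lies_on_cycle_general V F hVfin hVF E hE M M' hM hM' v f hvf hdiff
end

section
/- Let B_ext = ⟨V ∪ V_+, F ∪ F_+, E_ext⟩ be a bipartite graph with V, V_+, F, F_+ pairwise disjoint, and let ℓ : V ∪ V_+ → F ∪ F_+ be a natural labelling, i.e., a bijection with ℓ(V) = F and ℓ(V_+) = F_+. Let B_nat be the bipartite graph obtained from B_ext by adding the diagonal edges (x − ℓ(x)) for all x ∈ V ∪ V_+, and let M_nat = {(x − ℓ(x)) : x ∈ V ∪ V_+} be the corresponding diagonal perfect matching of B_nat. If M_ext is a perfect matching of B_ext that matches some equation f ∈ F to some variable v_+ ∈ V_+, then v_+ and f lie on a common directed cycle in the oriented graph G(B_nat, M_nat); in particular, G(B_nat, M_nat) contains a directed cycle passing through both a vertex of V_+ and a vertex of F (a feedback loop involving both the original model and the extension). -/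
/-- The diagonal edges `(x − ℓ x)` for `x ∈ S`, where `ℓ` is a natural labelling
assigning to each variable its own (equilibrium) equation. -/
def diagEdges {α : Type*} (ℓ : α → α) (S : Set α) : Set (α × α) :=
  {p : α × α | ∃ x ∈ S, p = (x, ℓ x)}

/-!
Let `σ` send each variable to its `M_ext`-partner and put `π = ℓ⁻¹ ∘ σ`, a permutation of the
finite set of variables. For every variable `x` with `π x ≠ x`, the edge `x − σ x` of `B_ext` is
not diagonal, so `G(B_nat, M_nat)` has the path `x → σ x = ℓ (π x) → π x`; hence every variable
reaches its image under `π`, and so every point of its `π`-cycle. Now `v₊ → f` is a non-diagonal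
edge, and `f = ℓ (π v₊) → π v₊` is a matched one, from which `v₊` is reached along its `π`-cycle.
-/

theorem Set.BijOn.union_of_disjoint_image {α β : Type*} {f : α → β} {s₁ s₂ : Set α}
    {t₁ t₂ : Set β} (h₁ : Set.BijOn f s₁ t₁) (h₂ : Set.BijOn f s₂ t₂) (ht : Disjoint t₁ t₂) :
    Set.BijOn f (s₁ ∪ s₂) (t₁ ∪ t₂) := by
  refine h₁.union h₂ ?_
  rintro x (hx | hx) y (hy | hy) hxy
  · exact h₁.injOn hx hy hxy
  · exact (ht.ne_of_mem (h₁.mapsTo hx) (h₂.mapsTo hy) hxy).elim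
  · exact (ht.ne_of_mem (h₁.mapsTo hy) (h₂.mapsTo hx) hxy.symm).elim
  · exact h₂.injOn hx hy hxy

theorem IsPerfectMatching.exists_bijOn {α : Type*} {S T : Set α} {E M : Set (α × α)}
    (hM : IsPerfectMatching S T E M) (hE : ∀ e ∈ E, e.1 ∈ S ∧ e.2 ∈ T) (hST : Disjoint S T) :
    ∃ σ : α → α, Set.BijOn σ S T ∧ ∀ x ∈ S, ∀ y, (x, y) ∈ M ↔ σ x = y := by
  have hMST : ∀ e ∈ M, e.1 ∈ S ∧ e.2 ∈ T := fun e he => hE e (hM.1 he)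
  have partner : ∀ x ∈ S, ∃ y, ∀ y', (x, y') ∈ M ↔ y = y' := by
    intro x hx
    obtain ⟨e, ⟨he, hex⟩, huniq⟩ := hM.2 x (Or.inl hx)
    have he1 : e.1 = x :=
      hex.resolve_right fun h => hST.ne_of_mem hx (h ▸ (hMST e he).2) rfl
    exact ⟨e.2, fun y' => ⟨fun hy' => (congrArg Prod.snd (huniq _ ⟨hy', Or.inl rfl⟩)).symm,
      fun h => h ▸ he1 ▸ he⟩⟩
  choose! σ hσ using partner
  have hσM : ∀ x ∈ S, (x, σ x) ∈ M := fun x hx => (hσ x hx (σ x)).2 rfl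
  refine ⟨σ, ⟨fun x hx => (hMST _ (hσM x hx)).2, fun x hx y hy hxy => ?_, fun y hy => ?_⟩, hσ⟩
  · obtain ⟨e, -, huniq⟩ := hM.2 (σ x) (Or.inr (hMST _ (hσM x hx)).2)
    exact congrArg Prod.fst
      ((huniq _ ⟨hσM x hx, Or.inr rfl⟩).trans (huniq _ ⟨hσM y hy, Or.inr hxy.symm⟩).symm)
  · obtain ⟨e, ⟨he, hey⟩, -⟩ := hM.2 y (Or.inr hy)
    have he2 : e.2 = y :=
      hey.resolve_left fun h => hST.ne_of_mem (hMST e he).1 (h ▸ hy) h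
    exact ⟨e.1, (hMST e he).1, (hσ e.1 (hMST e he).1 e.2 |>.1 he).trans he2⟩

section NaturalOrientation

variable {α : Type*} {E : Set (α × α)} {ℓ : α → α} {S : Set α}

theorem oStep_diag_of_mem {x : α} (hx : x ∈ S) :
    OStep (E ∪ diagEdges ℓ S) (diagEdges ℓ S) (ℓ x) x :=
  Or.inr ⟨Or.inr ⟨x, hx, rfl⟩, ⟨x, hx, rfl⟩⟩

theorem oStep_of_mem_of_ne {x y : α} (he : (x, y) ∈ E) (hy : y ≠ ℓ x) :
    OStep (E ∪ diagEdges ℓ S) (diagEdges ℓ S) x y :=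
  Or.inl ⟨Or.inl he, fun ⟨_, _, h⟩ => hy (by simp_all)⟩

theorem reach_of_mem_of_injOn (hℓ : Set.InjOn ℓ S) {x z : α} (hx : x ∈ S) (hz : z ∈ S)
    (he : (x, ℓ z) ∈ E) : Reach (E ∪ diagEdges ℓ S) (diagEdges ℓ S) x z := by
  by_cases hzx : z = x
  · exact hzx ▸ Relation.ReflTransGen.refl
  · exact .tail (.single (oStep_of_mem_of_ne he fun h => hzx (hℓ hz hx h)))
      (oStep_diag_of_mem hz)

theorem reach_of_perm_apply [Finite S] (hℓ : Set.InjOn ℓ S) (p : Equiv.Perm S)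
    (hp : ∀ x : S, ((x : α), ℓ (p x)) ∈ E) (x : S) :
    Reach (E ∪ diagEdges ℓ S) (diagEdges ℓ S) (p x) x := by
  have reach_pow : ∀ (n : ℕ) (y : S), Reach (E ∪ diagEdges ℓ S) (diagEdges ℓ S) y ((p ^ n) y) := by
    intro n y
    induction n with
    | zero => exact Relation.ReflTransGen.refl
    | succ n ih =>
      rw [pow_succ', Equiv.Perm.mul_apply]
      exact ih.trans (reach_of_mem_of_injOn hℓ ((p ^ n) y).2 (p ((p ^ n) y)).2 (hp _))
  obtain ⟨n, hn⟩ :=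
    (Equiv.Perm.sameCycle_apply_left.2 (Equiv.Perm.SameCycle.refl p x)).exists_nat_pow_eq
  simpa only [hn] using reach_pow n (p x)

end NaturalOrientation

theorem matched_across_implies_feedback_loop_general {α : Type*}
    (V Vp F Fp : Set α)
    (hVfin : V.Finite) (hVpfin : Vp.Finite)
    (hFFp : Disjoint F Fp)
    (hVF : Disjoint (V ∪ Vp) (F ∪ Fp))
    (ℓ : α → α)
    (hℓV : Set.BijOn ℓ V F) (hℓVp : Set.BijOn ℓ Vp Fp)
    (Eext : Set (α × α))
    (hE : ∀ e ∈ Eext, e.1 ∈ V ∪ Vp ∧ e.2 ∈ F ∪ Fp)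
    (Mext : Set (α × α))
    (hMext : IsPerfectMatching (V ∪ Vp) (F ∪ Fp) Eext Mext)
    (vp f : α) (hvp : vp ∈ Vp) (hf : f ∈ F) (hmatch : (vp, f) ∈ Mext) :
    Relation.TransGen
      (OStep (Eext ∪ diagEdges ℓ (V ∪ Vp)) (diagEdges ℓ (V ∪ Vp))) vp f ∧
    Relation.TransGen
      (OStep (Eext ∪ diagEdges ℓ (V ∪ Vp)) (diagEdges ℓ (V ∪ Vp))) f vp := by
  have : Finite ↥(V ∪ Vp) := (hVfin.union hVpfin).to_subtype
  obtain ⟨σ, hσ, hσM⟩ := hMext.exists_bijOn hE hVF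
  have hℓ := hℓV.union_of_disjoint_image hℓVp hFFp
  let p : Equiv.Perm ↥(V ∪ Vp) := (hσ.equiv σ).trans (hℓ.equiv ℓ).symm
  have hℓp : ∀ x, ℓ (p x) = σ x := fun x => congrArg Subtype.val ((hℓ.equiv ℓ).apply_symm_apply _)
  have hp : ∀ x : ↥(V ∪ Vp), ((x : α), ℓ (p x)) ∈ Eext := fun x =>
    hMext.1 ((hσM x x.2 _).2 (hℓp x).symm)
  let vp' : ↥(V ∪ Vp) := ⟨vp, Or.inr hvp⟩
  have hℓpvp : ℓ (p vp') = f := (hℓp vp').trans ((hσM vp (Or.inr hvp) f).1 hmatch)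
  refine ⟨.single (oStep_of_mem_of_ne (hMext.1 hmatch) fun h => ?_), ?_⟩
  · exact hFFp.ne_of_mem hf (hℓVp.mapsTo hvp) h
  · exact .head' (hℓpvp ▸ oStep_diag_of_mem (p vp').2)
      (reach_of_perm_apply hℓ.injOn p hp vp')

/-- Let `ℓ` be a natural labelling (a bijection mapping `V` onto `F`
and `V₊` onto `F₊`), `B_nat` the bipartite graph obtained from `B_ext` by adding all
diagonal edges `(x − ℓ x)`, and `M_nat` the diagonal perfect matching of `B_nat`.
If a perfect matching `M_ext` of `B_ext` matches some `f ∈ F` to some `v₊ ∈ V₊`,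
then `v₊` and `f` lie on a common directed cycle of `G(B_nat, M_nat)`: there is a
feedback loop involving both the original model and the extension. -/
theorem matched_across_implies_feedback_loop {α : Type*}
    (V Vp F Fp : Set α)
    (hVfin : V.Finite) (hVpfin : Vp.Finite) (hFfin : F.Finite) (hFpfin : Fp.Finite)
    (hVVp : Disjoint V Vp) (hFFp : Disjoint F Fp)
    (hVF : Disjoint (V ∪ Vp) (F ∪ Fp))
    (ℓ : α → α)
    (hℓV : Set.BijOn ℓ V F) (hℓVp : Set.BijOn ℓ Vp Fp)
    (Eext : Set (α × α))
    (hE : ∀ e ∈ Eext, e.1 ∈ V ∪ Vp ∧ e.2 ∈ F ∪ Fp)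
    (Mext : Set (α × α))
    (hMext : IsPerfectMatching (V ∪ Vp) (F ∪ Fp) Eext Mext)
    (vp f : α) (hvp : vp ∈ Vp) (hf : f ∈ F) (hmatch : (vp, f) ∈ Mext) :
    Relation.TransGen
      (OStep (Eext ∪ diagEdges ℓ (V ∪ Vp)) (diagEdges ℓ (V ∪ Vp))) vp f ∧
    Relation.TransGen
      (OStep (Eext ∪ diagEdges ℓ (V ∪ Vp)) (diagEdges ℓ (V ∪ Vp))) f vp :=
  matched_across_implies_feedback_loop_general V Vp F Fp hVfin hVpfin hFFp hVF ℓ hℓV hℓVp Eext hE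
    Mext hMext vp f hvp hf hmatch
end
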